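/- arXiv:2412.18014 — 4 statements merged into one kernel-verified Lean document; each statement's English description precedes it below -/
import Mathlib

section
/- For every a > 0, sup_{z∈ℝ} |d(z, [−1,1]) − π_a(z)| ≤ 2/a. -/
/-!
Writing `sp x = log (1 + exp x)` for the softplus function, `a · π_a(z) = sp (a(z-1)) + sp (a(-z-1))`,
while `a · d(z, [-1,1]) = max (a(z-1)) 0 + max (a(-z-1)) 0`. Termwise,
`max x 0 ≤ sp x ≤ max x 0 + log 2`, because `exp (max x 0) ≤ 1 + exp x ≤ 2 exp (max x 0)`.
Hence `0 ≤ π_a(z) - d(z, [-1,1]) ≤ 2 log 2 / a < 2 / a`.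
-/

noncomputable section

/-- The logistic function `φ`. -/
def logistic (z : ℝ) : ℝ := Real.exp z / (1 + Real.exp z)

/-- The smooth approximation `π_a` of the distance to `[-1,1]`. -/
def pia (a z : ℝ) : ℝ :=
  (Real.log (1 + Real.exp (a * (z - 1))) + Real.log (1 + Real.exp (a * (-z - 1)))) / a

/-- Euclidean distance from `z` to the cube `[-1,1]ⁿ`. -/
def cubeDist {n : ℕ} (z : Fin n → ℝ) : ℝ :=
  Real.sqrt (∑ i, max (|z i| - 1) 0 ^ 2)

end

open Real

lemma max_zero_le_log_one_add_exp (x : ℝ) : max x 0 ≤ log (1 + exp x) := by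
  refine max_le ((le_log_iff_exp_le (by positivity)).mpr (by linarith)) (log_nonneg ?_)
  linarith [exp_pos x]

lemma log_one_add_exp_le (x : ℝ) : log (1 + exp x) ≤ max x 0 + log 2 := by
  rw [log_le_iff_le_exp (by positivity), exp_add, exp_log two_pos]
  have h_one : 1 ≤ exp (max x 0) := one_le_exp (le_max_right x 0)
  have h_exp : exp x ≤ exp (max x 0) := exp_le_exp.mpr (le_max_left x 0)
  linarith

lemma max_abs_sub_one_zero (z : ℝ) : max (|z| - 1) 0 = max (z - 1) 0 + max (-z - 1) 0 := by
  rcases le_total 0 z with hz | hz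
  · rw [abs_of_nonneg hz, max_eq_right (show -z - 1 ≤ 0 by linarith), add_zero]
  · rw [abs_of_nonpos hz, max_eq_right (show z - 1 ≤ 0 by linarith), zero_add]

lemma mul_max_abs_sub_one_zero {a : ℝ} (ha : 0 ≤ a) (z : ℝ) :
    a * max (|z| - 1) 0 = max (a * (z - 1)) 0 + max (a * (-z - 1)) 0 := by
  rw [max_abs_sub_one_zero, mul_add, mul_max_of_nonneg _ _ ha, mul_max_of_nonneg _ _ ha, mul_zero]

lemma mul_pia {a : ℝ} (ha : a ≠ 0) (z : ℝ) :
    a * pia a z = log (1 + exp (a * (z - 1))) + log (1 + exp (a * (-z - 1))) :=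
  mul_div_cancel₀ _ ha

lemma pia_sub_max_abs_sub_one_zero_mem_Icc {a : ℝ} (ha : 0 < a) (z : ℝ) :
    pia a z - max (|z| - 1) 0 ∈ Set.Icc 0 (2 * log 2 / a) := by
  have h_scaled : a * (pia a z - max (|z| - 1) 0) =
      (log (1 + exp (a * (z - 1))) + log (1 + exp (a * (-z - 1)))) -
        (max (a * (z - 1)) 0 + max (a * (-z - 1)) 0) := by
    rw [mul_sub, mul_pia ha.ne', mul_max_abs_sub_one_zero ha.le]
  constructor
  · refine nonneg_of_mul_nonneg_right ?_ ha
    rw [h_scaled]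
    linarith [max_zero_le_log_one_add_exp (a * (z - 1)),
      max_zero_le_log_one_add_exp (a * (-z - 1))]
  · rw [le_div_iff₀ ha, mul_comm, h_scaled]
    linarith [log_one_add_exp_le (a * (z - 1)), log_one_add_exp_le (a * (-z - 1))]

/-- `π_a` approximates the distance to `[-1,1]` uniformly within `2/a`. -/
theorem stmt_4 (a : ℝ) (ha : 0 < a) :
    ∀ z : ℝ, |max (|z| - 1) 0 - pia a z| ≤ 2 / a := by
  intro z
  obtain ⟨h_nonneg, h_le⟩ := pia_sub_max_abs_sub_one_zero_mem_Icc ha z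
  have h_log_two : 2 * log 2 ≤ 2 := by linarith [log_two_lt_d9]
  rw [abs_sub_comm, abs_of_nonneg h_nonneg]
  exact h_le.trans (div_le_div_of_nonneg_right h_log_two ha.le)
end

section
/- For every a > 0 and every j ∈ {1,2,3,4}, the j-th derivative of π_a satisfies sup_{z∈ℝ} |π_a^{(j)}(z)| ≤ 2 a^{j−1}. -/
/-!
Write `π_a z = (s(a(z-1)) + s(a(-z-1)))/a` with the softplus `s t = log (1 + eᵗ)`, whose
derivative is the sigmoid `σ`. By the chain rule each of the two terms contributes
`aʲ⁻¹ · |σ⁽ʲ⁻¹⁾|`, and for `j ≤ 4` the derivatives `σ, σ(1-σ), σ(1-σ)(1-2σ)` and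
`σ(1-σ)(1-6σ(1-σ))` are bounded by `1` because `0 < σ < 1` and `0 ≤ σ(1-σ) ≤ 1/4`.
-/

open Real

noncomputable def softplus (t : ℝ) : ℝ := log (1 + exp t)

lemma hasDerivAt_softplus (t : ℝ) : HasDerivAt softplus (sigmoid t) t := by
  unfold softplus
  convert ((hasDerivAt_exp t).const_add 1).log (by positivity) using 1
  rw [sigmoid_def, exp_neg]
  field_simp
  ring

lemma deriv_softplus : deriv softplus = sigmoid :=
  funext fun t => (hasDerivAt_softplus t).deriv

lemma contDiff_softplus {n : WithTop ℕ∞} : ContDiff ℝ n softplus :=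
  (contDiff_const.add contDiff_exp).log fun t => by positivity

lemma iteratedDeriv_succ_softplus (n : ℕ) :
    iteratedDeriv (n + 1) softplus = iteratedDeriv n sigmoid := by
  rw [iteratedDeriv_succ', deriv_softplus]

lemma iteratedDeriv_two_sigmoid :
    iteratedDeriv 2 sigmoid = fun x => sigmoid x * (1 - sigmoid x) * (1 - 2 * sigmoid x) := by
  rw [iteratedDeriv_succ, iteratedDeriv_one, deriv_sigmoid]
  funext x
  have h := hasDerivAt_sigmoid x
  exact ((h.mul (h.const_sub 1)).deriv).trans (by ring)

lemma iteratedDeriv_three_sigmoid :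
    iteratedDeriv 3 sigmoid = fun x =>
      sigmoid x * (1 - sigmoid x) * (1 - 6 * (sigmoid x * (1 - sigmoid x))) := by
  rw [iteratedDeriv_succ, iteratedDeriv_two_sigmoid]
  funext x
  have h := hasDerivAt_sigmoid x
  exact (((h.mul (h.const_sub 1)).mul ((h.const_mul 2).const_sub 1)).deriv).trans
    (by simp only [Pi.mul_apply]; ring)

lemma abs_iteratedDeriv_sigmoid_le_one {n : ℕ} (hn : n ≤ 3) (x : ℝ) :
    |iteratedDeriv n sigmoid x| ≤ 1 := by
  have h₀ := sigmoid_pos x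
  have h₁ := sigmoid_lt_one x
  have hq₀ : 0 ≤ sigmoid x * (1 - sigmoid x) := by nlinarith
  have hq₁ : sigmoid x * (1 - sigmoid x) ≤ 1 / 4 := by nlinarith [sq_nonneg (1 - 2 * sigmoid x)]
  interval_cases n
  · rw [iteratedDeriv_zero, abs_of_pos h₀]
    exact h₁.le
  · rw [iteratedDeriv_one, deriv_sigmoid, abs_of_nonneg hq₀]
    linarith
  · rw [iteratedDeriv_two_sigmoid, abs_mul]
    exact mul_le_one₀ (by rw [abs_le]; constructor <;> linarith) (abs_nonneg _)
      (by rw [abs_le]; constructor <;> linarith)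
  · rw [iteratedDeriv_three_sigmoid, abs_mul]
    exact mul_le_one₀ (by rw [abs_le]; constructor <;> linarith) (abs_nonneg _)
      (by rw [abs_le]; constructor <;> linarith)

section Affine

variable {f : ℝ → ℝ} {n : ℕ}

lemma iteratedDeriv_comp_mul_sub_const (hf : ContDiff ℝ n f) (a b : ℝ) :
    iteratedDeriv n (fun z => f (a * (z - b))) =
      fun z => a ^ n * iteratedDeriv n f (a * (z - b)) := by
  rw [iteratedDeriv_comp_sub_const n (fun z => f (a * z)), iteratedDeriv_comp_const_mul hf]

lemma iteratedDeriv_comp_mul_neg_sub_const (hf : ContDiff ℝ n f) (a b : ℝ) :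
    iteratedDeriv n (fun z => f (a * (-z - b))) =
      fun z => (-a) ^ n * iteratedDeriv n f (a * (-z - b)) := by
  funext z
  rw [iteratedDeriv_comp_neg n (fun z => f (a * (z - b))), iteratedDeriv_comp_mul_sub_const hf,
    smul_eq_mul]
  ring

lemma abs_iteratedDeriv_succ_symm_comp_le {M a : ℝ} (ha : 0 < a) (hf : ContDiff ℝ (n + 1) f)
    (hM : ∀ t, |iteratedDeriv (n + 1) f t| ≤ M) (z : ℝ) :
    |iteratedDeriv (n + 1) (fun z => (f (a * (z - 1)) + f (a * (-z - 1))) / a) z| ≤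
      2 * a ^ n * M := by
  have hf₁ : ContDiff ℝ (n + 1) fun z => f (a * (z - 1)) := by fun_prop
  have hf₂ : ContDiff ℝ (n + 1) fun z => f (a * (-z - 1)) := by fun_prop
  rw [iteratedDeriv_div_const, iteratedDeriv_fun_add hf₁.contDiffAt hf₂.contDiffAt,
    iteratedDeriv_comp_mul_sub_const hf, iteratedDeriv_comp_mul_neg_sub_const hf]
  set F := iteratedDeriv (n + 1) f
  have habs_pow : |(-a) ^ (n + 1)| = a ^ (n + 1) := by rw [abs_pow, abs_neg, abs_of_pos ha]
  rw [abs_div, abs_of_pos ha, div_le_iff₀ ha]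
  calc |a ^ (n + 1) * F (a * (z - 1)) + (-a) ^ (n + 1) * F (a * (-z - 1))|
      ≤ |a ^ (n + 1) * F (a * (z - 1))| + |(-a) ^ (n + 1) * F (a * (-z - 1))| := abs_add_le _ _
    _ = a ^ (n + 1) * |F (a * (z - 1))| + a ^ (n + 1) * |F (a * (-z - 1))| := by
      rw [abs_mul, abs_mul, habs_pow, abs_of_pos (pow_pos ha _)]
    _ ≤ a ^ (n + 1) * M + a ^ (n + 1) * M := by gcongr <;> apply hM
    _ = 2 * a ^ n * M * a := by ring

end Affine

/-- Bounds on the first four derivatives of `π_a`. -/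
theorem stmt_5 (a : ℝ) (ha : 0 < a) :
    ∀ j ∈ ({1, 2, 3, 4} : Finset ℕ), ∀ z : ℝ,
      |iteratedDeriv j (pia a) z| ≤ 2 * a ^ (j - 1) := by
  intro j hj z
  obtain ⟨n, rfl, hn⟩ : ∃ n, j = n + 1 ∧ n ≤ 3 := by
    simp only [Finset.mem_insert, Finset.mem_singleton] at hj
    exact ⟨j - 1, by omega, by omega⟩
  have hpia : pia a = fun z => (softplus (a * (z - 1)) + softplus (a * (-z - 1))) / a := rfl
  have hbound (t : ℝ) : |iteratedDeriv (n + 1) softplus t| ≤ 1 := by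
    rw [iteratedDeriv_succ_softplus]
    exact abs_iteratedDeriv_sigmoid_le_one hn t
  simpa [hpia] using abs_iteratedDeriv_succ_symm_comp_le ha contDiff_softplus hbound z
end

section
/- Let p_1, …, p_m be connected LDPs in dimension n with zero constant term, with p_i of total degree at most Δ_i. Suppose there are subsets S_1, …, S_m ⊆ {1,…,n} and constants c, γ > 0 such that: (1) S_i ⊆ p_i for every i ∈ [m]; and (2) for every j ∈ [m] and all 1 ≤ k₁ < … < k_j ≤ m, |S_{k₁} ∪ … ∪ S_{k_j}| ≥ c j^γ. Then ‖Σ_{i=1}^m p_i‖ ≤ ((1 + max_{i∈[m]} Δ_i)/c)^{1/γ} · max_{i∈[m]} ‖p_i‖. -/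
open MeasureTheory ProbabilityTheory Filter
open scoped ENNReal NNReal

noncomputable section

/-- Index type of the variables `x_{ij}`, `1 ≤ i < j ≤ n`. -/
abbrev Edge (n : ℕ) : Type := {e : Fin n × Fin n // e.1 < e.2}

/-- A (low-degree) polynomial in the variables `x_{ij}`, `1 ≤ i < j ≤ n`. -/
abbrev LDP (n : ℕ) : Type := MvPolynomial (Edge n) ℝ

/-- `‖p‖ = max_α |c_{p,α}|`. -/
def LDPnorm {n : ℕ} (p : LDP n) : ℝ :=
  ⨆ α : Edge n →₀ ℕ, |MvPolynomial.coeff α p|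

/-- Evaluation of an LDP at the entries `(M i j)_{i<j}` of a matrix. -/
def evalMat {n : ℕ} (p : LDP n) (M : Matrix (Fin n) (Fin n) ℝ) : ℝ :=
  MvPolynomial.eval (fun e : Edge n => M e.val.1 e.val.2) p

/-- The vertex set `V_α` of the factor graph of an exponent `α`. -/
def vertexSet {n : ℕ} (α : Edge n →₀ ℕ) : Set (Fin n) :=
  {k | ∃ e : Edge n, α e ≠ 0 ∧ (e.val.1 = k ∨ e.val.2 = k)}

/-- The factor graph `G_α`. -/
def graphOf {n : ℕ} (α : Edge n →₀ ℕ) : SimpleGraph (Fin n) where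
  Adj i j := (∃ h : i < j, α ⟨(i, j), h⟩ ≠ 0) ∨ (∃ h : j < i, α ⟨(j, i), h⟩ ≠ 0)
  symm := ⟨by intro i j h; exact h.symm⟩
  loopless := ⟨by intro i h; rcases h with ⟨h, _⟩ | ⟨h, _⟩ <;> exact absurd h (lt_irrefl i)⟩

/-- `x^α` is connected: all vertices of `V_α` are mutually reachable in `G_α`
(vacuously true for the constant monomial). -/
def ConnectedExp {n : ℕ} (α : Edge n →₀ ℕ) : Prop :=
  ∀ u ∈ vertexSet α, ∀ v ∈ vertexSet α, (graphOf α).Reachable u v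

/-- `G_α` is a tree. -/
def IsTreeExp {n : ℕ} (α : Edge n →₀ ℕ) : Prop :=
  ConnectedExp α ∧ (graphOf α).IsAcyclic

/-- every entry of `α` is at most 2. -/
def MaxTwo {n : ℕ} (α : Edge n →₀ ℕ) : Prop := ∀ e : Edge n, α e ≤ 2

/-- `G_α` a tree and all entries of `α` at most `2`. -/
def IsTree2 {n : ℕ} (α : Edge n →₀ ℕ) : Prop := IsTreeExp α ∧ MaxTwo α

/-- `‖α‖₁`. -/
def expDeg {n : ℕ} (α : Edge n →₀ ℕ) : ℕ := α.sum fun _ k => k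

/-- `p ∈ T_{n,2,Δ}`. -/
def MemT2 {n : ℕ} (Δ : ℕ) (p : LDP n) : Prop :=
  ∀ α : Edge n →₀ ℕ, MvPolynomial.coeff α p ≠ 0 → IsTree2 α ∧ expDeg α ≤ Δ

/-- `p` is a connected LDP. -/
def ConnectedLDP {n : ℕ} (p : LDP n) : Prop :=
  ∀ α : Edge n →₀ ℕ, MvPolynomial.coeff α p ≠ 0 → ConnectedExp α

/-- `p` contains node `i` (the constant monomial contains every node). -/
def ContainsNode {n : ℕ} (i : Fin n) (p : LDP n) : Prop :=
  ∀ α : Edge n →₀ ℕ, MvPolynomial.coeff α p ≠ 0 → α = 0 ∨ i ∈ vertexSet α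

/-- `S ⊆ p` (the constant monomial contains every node). -/
def ContainsSet {n : ℕ} (S : Finset (Fin n)) (p : LDP n) : Prop :=
  ∀ α : Edge n →₀ ℕ, MvPolynomial.coeff α p ≠ 0 → α = 0 ∨ (S : Set (Fin n)) ⊆ vertexSet α

open scoped Classical in
/-- The tree projection `p^Tr`. -/
def treeProj {n : ℕ} (p : LDP n) : LDP n :=
  ∑ α ∈ p.support, if IsTree2 α then MvPolynomial.monomial α (MvPolynomial.coeff α p) else 0

instance matrixMeasurableSpace {m n α : Type*} [MeasurableSpace α] :
    MeasurableSpace (Matrix m n α) :=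
  inferInstanceAs (MeasurableSpace (m → n → α))

/-- Build a symmetric zero-diagonal matrix out of upper-triangular entries. -/
def symmetrize {n : ℕ} (g : Edge n → ℝ) : Matrix (Fin n) (Fin n) ℝ :=
  Matrix.of fun i j =>
    if h : i < j then g ⟨(i, j), h⟩ else if h' : j < i then g ⟨(j, i), h'⟩ else 0

/-- The GOE(n) distribution, as a measure on symmetric zero-diagonal matrices:
i.i.d. `N(0, 1/n)` entries above the diagonal. -/
def GOEMeasure (n : ℕ) : Measure (Matrix (Fin n) (Fin n) ℝ) :=
  (Measure.pi fun _ : Edge n => gaussianReal 0 (n : ℝ≥0)⁻¹).map symmetrize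

/-- The law of `-(B - d/n)/√(d(1-d/n))`, `B ∼ Bernoulli(d/n)`. -/
def hatGEntry (n : ℕ) (d : ℝ) : Measure ℝ :=
  (Real.toNNReal (1 - d / n)) • Measure.dirac ((d / n) / Real.sqrt (d * (1 - d / n)))
    + (Real.toNNReal (d / n)) • Measure.dirac (-(1 - d / n) / Real.sqrt (d * (1 - d / n)))

instance hatGEntry.isFiniteMeasure (n : ℕ) (d : ℝ) : IsFiniteMeasure (hatGEntry n d) := by
  unfold hatGEntry; infer_instance

/-- The distribution `Ĝ(n, d/n)` of the centered rescaled adjacency matrix. -/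
def hatGMeasure (n : ℕ) (d : ℝ) : Measure (Matrix (Fin n) (Fin n) ℝ) :=
  (Measure.pi fun _ : Edge n => hatGEntry n d).map symmetrize

/-- `p(M) = (p_1(M),…,p_n(M))`. -/
def pEval {n : ℕ} (p : Fin n → LDP n) (M : Matrix (Fin n) (Fin n) ℝ) : Fin n → ℝ :=
  fun i => evalMat (p i) M

/-- `vᵀ M v`. -/
def quadForm {n : ℕ} (M : Matrix (Fin n) (Fin n) ℝ) (v : Fin n → ℝ) : ℝ :=
  dotProduct v (M.mulVec v)

end


/-!
Fix an exponent `α` and let `I` be the set of indices `i` for which `x^α` occurs in `p i`.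
As the constant terms vanish, `α ≠ 0`, so every `S i` with `i ∈ I` lies in `V_α`. The factor
graph is connected on `V_α`, hence `|V_α| ≤ |E_α| + 1 ≤ ‖α‖₁ + 1 ≤ 1 + max Δ`, and the expansion
hypothesis turns this into `|I| ≤ ((1 + max Δ) / c) ^ (1 / γ)`. The `α`-coefficient of the sum
has only `|I|` nonzero terms, each bounded by `max ‖p i‖`.
-/

open Finset

theorem Finsupp.card_support_le_sum {ι : Type*} (f : ι →₀ ℕ) :
    #f.support ≤ f.sum fun _ k => k := by
  rw [card_eq_sum_ones, Finsupp.sum]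
  exact Finset.sum_le_sum fun i hi => Nat.one_le_iff_ne_zero.mpr (Finsupp.mem_support_iff.mp hi)

theorem Real.le_rpow_one_div_of_mul_rpow_le {x c γ D : ℝ} (hx : 0 ≤ x) (hc : 0 < c)
    (hγ : 0 < γ) (h : c * x ^ γ ≤ D) : x ≤ (D / c) ^ (1 / γ) := by
  have hxγ : 0 ≤ x ^ γ := Real.rpow_nonneg hx γ
  rw [one_div, Real.le_rpow_inv_iff_of_pos hx (div_nonneg (by nlinarith) hc.le) hγ,
    le_div_iff₀ hc, mul_comm]
  exact h

section

variable {n : ℕ}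

theorem card_edgeSet_graphOf_le (α : Edge n →₀ ℕ) :
    Nat.card (graphOf α).edgeSet ≤ #α.support := by
  let toEdge : α.support → (graphOf α).edgeSet := fun e =>
    ⟨s(e.1.1.1, e.1.1.2), Or.inl ⟨e.1.2, Finsupp.mem_support_iff.mp e.2⟩⟩
  have hsurj : Function.Surjective toEdge := by
    rintro ⟨z, hz⟩
    induction z using Sym2.ind with
    | _ i j =>
      rcases hz with ⟨hij, hα⟩ | ⟨hji, hα⟩
      · exact ⟨⟨⟨(i, j), hij⟩, Finsupp.mem_support_iff.mpr hα⟩, rfl⟩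
      · exact ⟨⟨⟨(j, i), hji⟩, Finsupp.mem_support_iff.mpr hα⟩, Subtype.ext Sym2.eq_swap⟩
  exact (Nat.card_le_card_of_surjective toEdge hsurj).trans_eq (Nat.card_eq_finsetCard _)

theorem ConnectedExp.card_le_expDeg_add_one {α : Edge n →₀ ℕ} (hα : ConnectedExp α)
    {s : Finset (Fin n)} (hs : (s : Set (Fin n)) ⊆ vertexSet α) : #s ≤ expDeg α + 1 := by
  obtain rfl | ⟨u, hu⟩ := s.eq_empty_or_nonempty
  · simp
  set C := (graphOf α).connectedComponentMk u
  have hsC : (s : Set (Fin n)) ⊆ C.supp := fun v hv =>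
    SimpleGraph.ConnectedComponent.sound (hα v (hs hv) u (hs hu))
  calc #s = Nat.card s := (Nat.card_eq_finsetCard s).symm
    _ ≤ Nat.card C.supp := Nat.card_mono (Set.toFinite _) hsC
    _ ≤ Nat.card C.toSimpleGraph.edgeSet + 1 :=
      C.connected_toSimpleGraph.card_vert_le_card_edgeSet_add_one
    _ ≤ Nat.card (graphOf α).edgeSet + 1 := by
      gcongr
      exact Nat.card_le_card_of_injective _
        (SimpleGraph.Embedding.induce C.supp).mapEdgeSet.injective
    _ ≤ expDeg α + 1 := by
      gcongr
      exact (card_edgeSet_graphOf_le α).trans (Finsupp.card_support_le_sum α)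

theorem ContainsSet.subset_vertexSet {S : Finset (Fin n)} {p : LDP n} (hS : ContainsSet S p)
    (h0 : MvPolynomial.coeff 0 p = 0) {α : Edge n →₀ ℕ} (hα : MvPolynomial.coeff α p ≠ 0) :
    (S : Set (Fin n)) ⊆ vertexSet α :=
  (hS α hα).resolve_left fun h => hα (h ▸ h0)

theorem card_biUnion_le_expDeg_add_one {ι : Type*} {p : ι → LDP n}
    (hconn : ∀ i, ConnectedLDP (p i)) (hconst : ∀ i, MvPolynomial.coeff 0 (p i) = 0)
    {S : ι → Finset (Fin n)} (hS : ∀ i, ContainsSet (S i) (p i)) {α : Edge n →₀ ℕ}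
    {I : Finset ι} (hI : ∀ i ∈ I, MvPolynomial.coeff α (p i) ≠ 0) :
    #(I.biUnion S) ≤ expDeg α + 1 := by
  obtain rfl | ⟨i₀, hi₀⟩ := I.eq_empty_or_nonempty
  · simp
  refine (hconn i₀ α (hI i₀ hi₀)).card_le_expDeg_add_one ?_
  simp only [coe_biUnion, Set.iUnion_subset_iff]
  exact fun i hi => (hS i).subset_vertexSet (hconst i) (hI i hi)

theorem abs_coeff_le_LDPnorm (p : LDP n) (α : Edge n →₀ ℕ) :
    |MvPolynomial.coeff α p| ≤ LDPnorm p := by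
  have hsupp : (Function.support fun β => |MvPolynomial.coeff β p|).Finite :=
    p.support.finite_toSet.subset fun β hβ => by simpa using hβ
  exact le_ciSup
    (((hsupp.image _).insert 0).subset (Function.range_subset_insert_image_support _)).bddAbove α

theorem LDPnorm_nonneg (p : LDP n) : 0 ≤ LDPnorm p :=
  (abs_nonneg _).trans (abs_coeff_le_LDPnorm p 0)

theorem abs_coeff_sum_le_card_mul {ι : Type*} (s : Finset ι) (p : ι → LDP n)
    (α : Edge n →₀ ℕ) {M : ℝ} (hM : ∀ i ∈ s, LDPnorm (p i) ≤ M) :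
    |MvPolynomial.coeff α (∑ i ∈ s, p i)| ≤
      #{i ∈ s | MvPolynomial.coeff α (p i) ≠ 0} * M := by
  rw [MvPolynomial.coeff_sum, ← sum_filter_ne_zero, ← nsmul_eq_mul, ← sum_const]
  refine (abs_sum_le_sum_abs _ _).trans (sum_le_sum fun i hi => ?_)
  exact (abs_coeff_le_LDPnorm _ _).trans (hM i (mem_filter.mp hi).1)

end

theorem stmt_9_general (n m : ℕ) (p : Fin m → LDP n) (Δ : Fin m → ℕ)
    (hconn : ∀ i, ConnectedLDP (p i))
    (hconst : ∀ i, MvPolynomial.coeff 0 (p i) = 0)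
    (hdeg : ∀ i, (p i).totalDegree ≤ Δ i)
    (S : Fin m → Finset (Fin n)) (c γ : ℝ) (hc : 0 < c) (hγ : 0 < γ)
    (hS : ∀ i, ContainsSet (S i) (p i))
    (hunion : ∀ I : Finset (Fin m), I.Nonempty →
      c * (I.card : ℝ) ^ γ ≤ ((I.biUnion S).card : ℝ)) :
    LDPnorm (∑ i, p i) ≤
      ((1 + (Finset.univ.sup Δ : ℕ)) / c) ^ (1 / γ) * ⨆ i, LDPnorm (p i) := by
  have hbdd : BddAbove (Set.range fun i => LDPnorm (p i)) := (Set.finite_range _).bddAbove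
  refine ciSup_le fun α => ?_
  set I : Finset (Fin m) := {i | MvPolynomial.coeff α (p i) ≠ 0}
  have hcard : (#I : ℝ) ≤ ((1 + (univ.sup Δ : ℕ)) / c) ^ (1 / γ) := by
    obtain hI | ⟨i₀, hi₀⟩ := I.eq_empty_or_nonempty
    · rw [hI, card_empty, Nat.cast_zero]
      exact Real.rpow_nonneg (by positivity) _
    have hα : MvPolynomial.coeff α (p i₀) ≠ 0 := (mem_filter.mp hi₀).2
    have hdegα : expDeg α ≤ univ.sup Δ :=
      (MvPolynomial.le_totalDegree (MvPolynomial.mem_support_iff.mpr hα)).trans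
        ((hdeg i₀).trans (le_sup (mem_univ i₀)))
    have hunionα : #(I.biUnion S) ≤ univ.sup Δ + 1 :=
      (card_biUnion_le_expDeg_add_one hconn hconst hS fun i hi => (mem_filter.mp hi).2).trans
        (by omega)
    refine Real.le_rpow_one_div_of_mul_rpow_le (Nat.cast_nonneg _) hc hγ
      ((hunion I ⟨i₀, hi₀⟩).trans ?_)
    rw [add_comm (1 : ℝ)]
    exact_mod_cast hunionα
  calc |MvPolynomial.coeff α (∑ i, p i)| ≤ #I * ⨆ i, LDPnorm (p i) :=
        abs_coeff_sum_le_card_mul _ _ _ fun i _ => le_ciSup hbdd i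
    _ ≤ _ := by
      gcongr
      exact Real.iSup_nonneg fun i => LDPnorm_nonneg _

/-- Norm bound for a sum of connected LDPs whose marked vertex sets expand. -/
theorem stmt_9 (n m : ℕ) (hm : 0 < m) (p : Fin m → LDP n) (Δ : Fin m → ℕ)
    (hconn : ∀ i, ConnectedLDP (p i))
    (hconst : ∀ i, MvPolynomial.coeff 0 (p i) = 0)
    (hdeg : ∀ i, (p i).totalDegree ≤ Δ i)
    (S : Fin m → Finset (Fin n)) (c γ : ℝ) (hc : 0 < c) (hγ : 0 < γ)
    (hS : ∀ i, ContainsSet (S i) (p i))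
    (hunion : ∀ I : Finset (Fin m), I.Nonempty →
      c * (I.card : ℝ) ^ γ ≤ ((I.biUnion S).card : ℝ)) :
    LDPnorm (∑ i, p i) ≤
      ((1 + (Finset.univ.sup Δ : ℕ)) / c) ^ (1 / γ) * ⨆ i, LDPnorm (p i) :=
  stmt_9_general n m p Δ hconn hconst hdeg S c γ hc hγ hS hunion
end

section
/- Let p and q be LDPs in dimension n. If p is connected and p^Tr = 0, then (pq)^Tr = 0. -/
open MeasureTheory ProbabilityTheory Filter
open scoped ENNReal NNReal

/-!
Every monomial of `pq` is `x^(β+γ)` with `x^β` a monomial of `p`. A connected subgraph of a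
forest is a tree, and entries of `β` are bounded by those of `β + γ`; so if `β + γ` passes the
tree test, so does `β`, and then `p^Tr = 0` forces the coefficient of `x^β` in `p` to vanish.
-/

lemma graphOf_mono {n : ℕ} {β α : Edge n →₀ ℕ} (h : β ≤ α) : graphOf β ≤ graphOf α := by
  have hne : ∀ e, β e ≠ 0 → α e ≠ 0 := fun e hβ => (Nat.pos_of_ne_zero hβ).trans_le (h e) |>.ne'
  rintro i j (⟨hlt, hij⟩ | ⟨hlt, hji⟩)
  exacts [Or.inl ⟨hlt, hne _ hij⟩, Or.inr ⟨hlt, hne _ hji⟩]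

lemma IsTree2.of_le {n : ℕ} {β α : Edge n →₀ ℕ} (hα : IsTree2 α) (hβ : ConnectedExp β)
    (h : β ≤ α) : IsTree2 β :=
  ⟨⟨hβ, hα.1.2.anti (graphOf_mono h)⟩, fun e => (h e).trans (hα.2 e)⟩

open scoped Classical in
lemma coeff_treeProj {n : ℕ} (p : LDP n) (β : Edge n →₀ ℕ) :
    MvPolynomial.coeff β (treeProj p) = if IsTree2 β then MvPolynomial.coeff β p else 0 := by
  rw [treeProj, MvPolynomial.coeff_sum, Finset.sum_eq_single β]
  · split_ifs <;> simp
  · intro α _ hαβ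
    split_ifs <;> simp [MvPolynomial.coeff_monomial, hαβ]
  · intro hβ
    rw [MvPolynomial.notMem_support_iff.mp hβ]
    split_ifs <;> simp

lemma treeProj_eq_zero_iff {n : ℕ} (p : LDP n) :
    treeProj p = 0 ↔ ∀ β, IsTree2 β → MvPolynomial.coeff β p = 0 := by
  classical
  simp only [MvPolynomial.ext_iff, coeff_treeProj, MvPolynomial.coeff_zero, ite_eq_right_iff]

/-- If `p` is connected and its tree projection vanishes, then the tree projection
of `pq` vanishes. -/
theorem stmt_10 (n : ℕ) (p q : LDP n) (hp : ConnectedLDP p)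
    (hTr : treeProj p = 0) : treeProj (p * q) = 0 := by
  rw [treeProj_eq_zero_iff] at hTr ⊢
  intro α hα
  rw [MvPolynomial.coeff_mul]
  refine Finset.sum_eq_zero fun ⟨β, γ⟩ hβγ => ?_
  rw [Finset.HasAntidiagonal.mem_antidiagonal] at hβγ
  by_cases hβ : MvPolynomial.coeff β p = 0
  · rw [hβ, zero_mul]
  · have hle : β ≤ α := hβγ ▸ le_self_add
    exact absurd (hTr β (hα.of_le (hp β hβ) hle)) hβ
end
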